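/- arXiv:1108.6263 — 2 statements merged into one kernel-verified Lean document; each statement's English description precedes it below -/
import Mathlib

section
/- The logic of paradox LP is not universal: there is no conservative translation from classical propositional logic CPC into LP. -/
/-- Formulas in the connectives `∧, ∨, ¬, ⊤, ⊥` (a functionally complete set for CPC). -/
inductive KForm : Type
  | var : ℕ → KForm
  | bot : KForm
  | top : KForm
  | neg : KForm → KForm
  | and : KForm → KForm → KForm
  | or : KForm → KForm → KForm
  deriving DecidableEq

/-- Boolean evaluation. -/
def KForm.evalB (v : ℕ → Bool) : KForm → Bool
  | .var n => v n
  | .bot => false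
  | .top => true
  | .neg φ => !(φ.evalB v)
  | .and φ ψ => φ.evalB v && ψ.evalB v
  | .or φ ψ => φ.evalB v || ψ.evalB v

/-- The three truth values 0, *, 1 of the Kleene algebra A3. -/
inductive K3 : Type
  | zero : K3
  | half : K3
  | one : K3
  deriving DecidableEq

/-- The truth order 0 < * < 1 as natural numbers. -/
def K3.toNat : K3 → ℕ
  | .zero => 0
  | .half => 1
  | .one => 2

/-- Meet (min) in the truth order. -/
def K3.min (a b : K3) : K3 := if a.toNat ≤ b.toNat then a else b

/-- Join (max) in the truth order. -/
def K3.max (a b : K3) : K3 := if a.toNat ≤ b.toNat then b else a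

/-- Kleene negation. -/
def K3.not : K3 → K3
  | .zero => .one
  | .half => .half
  | .one => .zero

/-- Evaluation in the Kleene algebra A3. -/
def KForm.eval3 (v : ℕ → K3) : KForm → K3
  | .var n => v n
  | .bot => .zero
  | .top => .one
  | .neg φ => (φ.eval3 v).not
  | .and φ ψ => (φ.eval3 v).min (ψ.eval3 v)
  | .or φ ψ => (φ.eval3 v).max (ψ.eval3 v)

/-- Classical consequence (over the language `∧, ∨, ¬, ⊤, ⊥`). -/
def CpcK (Γ : Set KForm) (φ : KForm) : Prop :=
  ∀ v : ℕ → Bool, (∀ ψ ∈ Γ, ψ.evalB v = true) → φ.evalB v = true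

/-- Kleene's 3-valued logic: only `1` is designated. -/
def KleeneK (Γ : Set KForm) (φ : KForm) : Prop :=
  ∀ v : ℕ → K3, (∀ ψ ∈ Γ, ψ.eval3 v = .one) → φ.eval3 v = .one

/-- The logic of paradox LP: both `*` and `1` are designated. -/
def LPK (Γ : Set KForm) (φ : KForm) : Prop :=
  ∀ v : ℕ → K3, (∀ ψ ∈ Γ, ψ.eval3 v ≠ .zero) → φ.eval3 v ≠ .zero


/-! ### Auxiliary material for the proof -/

instance : Fintype K3 where
  elems := {.zero, .half, .one}
  complete := by intro x; cases x <;> decide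

/-- The information order: `half` is below everything. -/
def K3.le3 (a b : K3) : Prop := a = K3.half ∨ a = b

instance (a b : K3) : Decidable (K3.le3 a b) :=
  decidable_of_iff (a = K3.half ∨ a = b) Iff.rfl

lemma K3.le3_not : ∀ a b : K3, K3.le3 a b → K3.le3 a.not b.not := by decide
lemma K3.le3_min : ∀ a a' b b' : K3, K3.le3 a a' → K3.le3 b b' →
    K3.le3 (K3.min a b) (K3.min a' b')  := by decide
lemma K3.le3_max : ∀ a a' b b' : K3, K3.le3 a a' → K3.le3 b b' →
    K3.le3 (K3.max a b) (K3.max a' b')  := by decide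

/-- Kleene connectives are monotone in the information order. -/
lemma eval3_le3 (φ : KForm) (v w : ℕ → K3) (h : ∀ n, K3.le3 (v n) (w n)) :
    K3.le3 (φ.eval3 v) (φ.eval3 w) := by
  induction φ with
  | var n => exact h n
  | bot => exact Or.inr rfl
  | top => exact Or.inr rfl
  | neg φ ih => exact K3.le3_not _ _ ih
  | and φ ψ ih1 ih2 => exact K3.le3_min _ _ _ _ ih1 ih2
  | or φ ψ ih1 ih2 => exact K3.le3_max _ _ _ _ ih1 ih2

lemma eval3_zero_mono (φ : KForm) (v w : ℕ → K3) (h : ∀ n, K3.le3 (v n) (w n))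
    (h0 : φ.eval3 v = K3.zero) : φ.eval3 w = K3.zero := by
  rcases eval3_le3 φ v w h with h' | h'
  · rw [h0] at h'; exact absurd h' (by decide)
  · rw [← h', h0]

/-- The (finite) set of variables of a formula. -/
def KForm.vars : KForm → Finset ℕ
  | .var n => {n}
  | .bot => ∅
  | .top => ∅
  | .neg φ => φ.vars
  | .and φ ψ => φ.vars ∪ ψ.vars
  | .or φ ψ => φ.vars ∪ ψ.vars

lemma eval3_congr (φ : KForm) (v w : ℕ → K3) (h : ∀ n ∈ φ.vars, v n = w n) :
    φ.eval3 v = φ.eval3 w := by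
  induction φ with
  | var n => exact h n (by simp [KForm.vars])
  | bot => rfl
  | top => rfl
  | neg φ ih => simp only [KForm.eval3]; rw [ih h]
  | and φ ψ ih1 ih2 =>
      simp only [KForm.eval3]
      rw [ih1 (fun n hn => h n (Finset.mem_union_left _ hn)),
        ih2 (fun n hn => h n (Finset.mem_union_right _ hn))]
  | or φ ψ ih1 ih2 =>
      simp only [KForm.eval3]
      rw [ih1 (fun n hn => h n (Finset.mem_union_left _ hn)),
        ih2 (fun n hn => h n (Finset.mem_union_right _ hn))]

/-- The logic of paradox LP is not universal: there is no conservative translation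
from classical propositional logic into LP. -/
theorem lp_not_universal :
    ¬ ∃ f : KForm → KForm,
      ∀ (Γ : Set KForm) (φ : KForm), CpcK Γ φ ↔ LPK (f '' Γ) (f φ) := by
  rintro ⟨f, hf⟩
  set Z : KForm := f .bot with hZdef
  -- the classically consistent sets Σ n = {pₙ} ∪ {¬pₘ : m ≠ n}
  set S : ℕ → Set KForm :=
    fun n => {φ | φ = .var n ∨ ∃ m, m ≠ n ∧ φ = .neg (.var m)} with hSdef
  have hsat : ∀ n, ¬ CpcK (S n) .bot := by
    intro n h
    have := h (fun m => decide (m = n)) ?_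
    · simp [KForm.evalB] at this
    · rintro ψ (rfl | ⟨m, hm, rfl⟩)
      · simp [KForm.evalB]
      · simp [KForm.evalB, hm]
  have hex : ∀ n, ∃ v : ℕ → K3,
      (∀ ψ ∈ S n, (f ψ).eval3 v ≠ .zero) ∧ Z.eval3 v = .zero := by
    intro n
    have h3 : ¬ LPK (f '' S n) (f .bot) := fun hl => hsat n ((hf _ _).mpr hl)
    unfold LPK at h3
    push_neg at h3
    obtain ⟨v, hv1, hv2⟩ := h3
    exact ⟨v, fun ψ hψ => hv1 (f ψ) ⟨ψ, hψ, rfl⟩, hv2⟩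
  choose v hv hz using hex
  -- pigeonhole on the restriction to the variables of Z
  obtain ⟨n, n', hnn, heq⟩ :=
    Finite.exists_ne_map_eq_of_infinite
      (fun n : ℕ => (fun m : Z.vars => v n m : Z.vars → K3))
  -- the merged valuation: like vₙ on vars Z, half elsewhere
  set w : ℕ → K3 := fun m => if m ∈ Z.vars then v n m else .half with hwdef
  have hvnn' : ∀ m ∈ Z.vars, v n m = v n' m := by
    intro m hm
    exact congrFun heq ⟨m, hm⟩
  have hwn : ∀ m, K3.le3 (w m) (v n m) := by
    intro m
    by_cases h : m ∈ Z.vars <;> simp [hwdef, h, K3.le3]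
  have hwn' : ∀ m, K3.le3 (w m) (v n' m) := by
    intro m
    by_cases h : m ∈ Z.vars
    · simp only [hwdef, if_pos h]
      exact Or.inr (hvnn' m h)
    · simp [hwdef, h, K3.le3]
  have hZw : Z.eval3 w = .zero := by
    rw [eval3_congr Z w (v n) (fun m hm => by simp [hwdef, hm])]
    exact hz n
  -- Σ n ∪ Σ n' is classically inconsistent
  have hcpc : CpcK (S n ∪ S n') .bot := by
    intro b hb
    have h1 := hb (.var n) (Or.inl (Or.inl rfl))
    have h2 := hb (.neg (.var n)) (Or.inr (Or.inr ⟨n, hnn, rfl⟩))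
    simp only [KForm.evalB] at h1 h2
    rw [h1] at h2
    exact absurd h2 (by decide)
  have hlp := (hf _ _).mp hcpc
  refine hlp w ?_ hZw
  rintro ψ ⟨χ, hχ | hχ, rfl⟩
  · exact fun h0 => hv n χ hχ (eval3_zero_mono _ _ _ hwn h0)
  · exact fun h0 => hv n' χ hχ (eval3_zero_mono _ _ _ hwn' h0)
end

section
/- There is no strictly increasing chain of length greater than 3 of affine Boolean functions ordered by pointwise entailment; consequently, classical propositional logic cannot be conservatively translated into its affine fragment CPC↾_{≡,¬}. -/
/-- `f` is affine over GF(2): `f(x) = Σ_{i∈I} x_i + c (mod 2)`. -/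
def AffineFun {n : ℕ} (f : (Fin n → Bool) → Bool) : Prop :=
  ∃ (s : Finset (Fin n)) (c : ZMod 2), ∀ x : Fin n → Bool,
    (if f x then (1 : ZMod 2) else 0) = (∑ i ∈ s, if x i then (1 : ZMod 2) else 0) + c

/-- Formulas of classical propositional logic (a functionally complete language). -/
inductive PropForm : Type
  | var : ℕ → PropForm
  | bot : PropForm
  | top : PropForm
  | neg : PropForm → PropForm
  | and : PropForm → PropForm → PropForm
  | or : PropForm → PropForm → PropForm
  | imp : PropForm → PropForm → PropForm

/-- Boolean evaluation. -/
def PropForm.eval (v : ℕ → Bool) : PropForm → Bool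
  | .var n => v n
  | .bot => false
  | .top => true
  | .neg φ => !(φ.eval v)
  | .and φ ψ => φ.eval v && ψ.eval v
  | .or φ ψ => φ.eval v || ψ.eval v
  | .imp φ ψ => !(φ.eval v) || ψ.eval v

/-- Classical consequence. -/
def Cpc (Γ : Set PropForm) (φ : PropForm) : Prop :=
  ∀ v : ℕ → Bool, (∀ ψ ∈ Γ, ψ.eval v = true) → φ.eval v = true

/-- Formulas of the affine fragment `CPC↾_{≡,¬}`, built from `≡` and `¬`. -/
inductive AForm : Type
  | var : ℕ → AForm
  | iff : AForm → AForm → AForm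
  | neg : AForm → AForm

/-- Boolean evaluation of affine formulas. -/
def AForm.eval (v : ℕ → Bool) : AForm → Bool
  | .var n => v n
  | .iff φ ψ => φ.eval v == ψ.eval v
  | .neg φ => !(φ.eval v)

/-- Consequence of the affine fragment. -/
def CpcA (Γ : Set AForm) (φ : AForm) : Prop :=
  ∀ v : ℕ → Bool, (∀ ψ ∈ Γ, ψ.eval v = true) → φ.eval v = true

open scoped symmDiff

/-!
Affine Boolean functions are exactly those commuting with the minority operation
`x ∆ y ∆ z`. If `f ≤ g` commute with it and `f x < g x`, `f y = 1`, `g z = 0`, then at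
`x ∆ y ∆ z` one gets `f = 0 ∆ 1 ∆ 0 = 1` and `g = 1 ∆ 1 ∆ 0 = 0`, contradicting `f ≤ g`. Hence
comparable affine functions satisfy `f = 0`, `g = 1` or `f = g`, so a strict chain has at most
three members. A conservative translation of classical logic into its affine fragment would carry
the strict chain `⊥ < p < p ∨ q < ⊤` to one of four affine functions.
-/

section Minority

variable {β : Type*} [BooleanAlgebra β]

def PreservesMinority (f : β → Bool) : Prop :=
  ∀ x y z, f (x ∆ y ∆ z) = f x ∆ f y ∆ f z

theorem PreservesMinority.eq_bot_or_eq_top_or_eq_of_le {f g : β → Bool}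
    (hf : PreservesMinority f) (hg : PreservesMinority g) (hfg : f ≤ g) :
    f = ⊥ ∨ g = ⊤ ∨ f = g := by
  by_contra! ⟨hf_ne, hg_ne, hfg_ne⟩
  obtain ⟨x, hfx, hgx⟩ : ∃ x, f x = false ∧ g x = true := by
    simpa only [Bool.lt_iff] using (Pi.lt_def.1 (hfg.lt_of_ne hfg_ne)).2
  obtain ⟨y, hfy⟩ : ∃ y, f y = true := by simpa [funext_iff] using hf_ne
  obtain ⟨z, hgz⟩ : ∃ z, g z = false := by simpa [funext_iff] using hg_ne
  have hgy : g y = true := by simpa [hfy, Bool.le_iff_imp] using hfg y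
  have hfz : f z = false := by simpa [hgz, Bool.le_iff_imp] using hfg z
  have hle := hfg (x ∆ y ∆ z)
  rw [hf, hg, hfx, hgx, hfy, hgy, hgz, hfz] at hle
  simp [Bool.symmDiff_eq_xor, Bool.le_iff_imp] at hle

theorem PreservesMinority.not_strictMono {g : Fin 4 → β → Bool}
    (hg : ∀ i, PreservesMinority (g i)) : ¬ StrictMono g := by
  intro hg_mono
  rcases (hg 1).eq_bot_or_eq_top_or_eq_of_le (hg 2) (hg_mono.monotone (by decide)) with h | h | h
  · exact not_lt_bot (h ▸ hg_mono (show (0 : Fin 4) < 1 by decide))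
  · exact not_top_lt (h ▸ hg_mono (show (2 : Fin 4) < 3 by decide))
  · exact (hg_mono (show (1 : Fin 4) < 2 by decide)).ne h

end Minority

def Bool.toZMod2 (b : Bool) : ZMod 2 := if b then 1 else 0

theorem Bool.toZMod2_symmDiff : ∀ a b : Bool, (a ∆ b).toZMod2 = a.toZMod2 + b.toZMod2 := by
  decide

theorem Bool.toZMod2_injective : Function.Injective Bool.toZMod2 := by
  intro a b
  cases a <;> cases b <;> decide

theorem AffineFun.preservesMinority {n : ℕ} {f : (Fin n → Bool) → Bool} (hf : AffineFun f) :
    PreservesMinority f := by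
  obtain ⟨s, c, hf⟩ := hf
  have hf' : ∀ x, (f x).toZMod2 = ∑ i ∈ s, (x i).toZMod2 + c := hf
  have hc : c + c = 0 := CharTwo.add_self_eq_zero c
  intro x y z
  apply Bool.toZMod2_injective
  simp only [hf', Bool.toZMod2_symmDiff, Pi.symmDiff_apply, Finset.sum_add_distrib]
  linear_combination -hc

theorem AForm.preservesMinority_eval (φ : AForm) : PreservesMinority (AForm.eval · φ) := by
  intro x y z
  induction φ with
  | var n => rfl
  | neg φ ih =>
    simp only [AForm.eval, ih]
    generalize φ.eval x = a, φ.eval y = b, φ.eval z = c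
    revert a b c; decide
  | iff φ ψ ihφ ihψ =>
    simp only [AForm.eval, ihφ, ihψ]
    generalize φ.eval x = a, φ.eval y = b, φ.eval z = c
    generalize ψ.eval x = a', ψ.eval y = b', ψ.eval z = c'
    revert a b c a' b' c'; decide

theorem cpc_singleton_iff {φ ψ : PropForm} :
    Cpc {φ} ψ ↔ (PropForm.eval · φ) ≤ (PropForm.eval · ψ) := by
  simp [Cpc, Pi.le_def, Bool.le_iff_imp]

theorem cpcA_singleton_iff {φ ψ : AForm} :
    CpcA {φ} ψ ↔ (AForm.eval · φ) ≤ (AForm.eval · ψ) := by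
  simp [CpcA, Pi.le_def, Bool.le_iff_imp]

def PropForm.chain : Fin 4 → PropForm :=
  ![.bot, .var 0, .or (.var 0) (.var 1), .top]

theorem PropForm.strictMono_eval_chain : StrictMono fun i => (PropForm.eval · (chain i)) := by
  rw [Fin.strictMono_iff_lt_succ]
  intro i
  fin_cases i <;>
    refine Pi.lt_def.2 ⟨fun v => by simp +contextual [chain, eval, Bool.le_iff_imp], ?_⟩
  · exact ⟨fun _ => true, by simp [chain, eval]⟩
  · exact ⟨fun n => n == 1, by simp [chain, eval]⟩
  · exact ⟨fun _ => false, by simp [chain, eval]⟩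

/-- There is no strictly increasing chain (under pointwise entailment) of affine Boolean
functions of length more than 3; consequently, classical propositional logic cannot be
conservatively translated into its affine fragment `CPC↾_{≡,¬}`. -/
theorem affine_no_long_chain_and_cpc_not_translatable :
    (¬ ∃ (n : ℕ) (g : Fin 4 → ((Fin n → Bool) → Bool)),
      (∀ i, AffineFun (g i)) ∧
      ∀ i j : Fin 4, i < j → (∀ x, g i x ≤ g j x) ∧ g i ≠ g j) ∧
    (¬ ∃ f : PropForm → AForm,
      ∀ (Γ : Set PropForm) (φ : PropForm), Cpc Γ φ ↔ CpcA (f '' Γ) (f φ)) := by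
  constructor
  · rintro ⟨n, g, haff, hchain⟩
    exact PreservesMinority.not_strictMono (fun i => (haff i).preservesMinority)
      fun i j hij => lt_of_le_of_ne (hchain i j hij).1 (hchain i j hij).2
  · rintro ⟨t, ht⟩
    have hlt : ∀ φ ψ, (PropForm.eval · φ) < (PropForm.eval · ψ) ↔
        (AForm.eval · (t φ)) < (AForm.eval · (t ψ)) := by
      intro φ ψ
      simp only [lt_iff_le_not_ge, ← cpc_singleton_iff, ← cpcA_singleton_iff,
        ← Set.image_singleton, ht]
    exact PreservesMinority.not_strictMono (g := fun i => (AForm.eval · (t (PropForm.chain i))))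
      (fun i => (t _).preservesMinority_eval)
      fun i j hij => (hlt _ _).1 (PropForm.strictMono_eval_chain hij)
end
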